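/- Let d ≥ 1, L > 0, and let f : ℝ^d → ℝ be L-smooth with inf_{y ∈ ℝ^d} f(y) > −∞. Suppose the sublevel set f⋆(ε) = {x ∈ ℝ^d : f(x) − inf f ≤ ε} is bounded for some ε > 0, and let σ > 0 satisfy σ < √(4ε/(3Ld)). Then f_σ attains its minimum on ℝ^d, i.e. there exists x⋆_σ ∈ ℝ^d with f_σ(x⋆_σ) ≤ f_σ(x) for all x ∈ ℝ^d. -/

import Mathlib

open MeasureTheory
open scoped Classical

/-- Gaussian smoothing of `f : ℝ^d → ℝ` with radius `σ`:
`f_σ(x) = π^(−d/2) ∫ f(x + σu) e^(−‖u‖²) du`, with `f_0 = f`. -/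
noncomputable def gsmooth {d : ℕ} (f : EuclideanSpace ℝ (Fin d) → ℝ) (σ : ℝ)
    (x : EuclideanSpace ℝ (Fin d)) : ℝ :=
  if σ = 0 then f x
  else Real.pi ^ (-(d : ℝ) / 2) *
    ∫ u : EuclideanSpace ℝ (Fin d), f (x + σ • u) * Real.exp (-‖u‖ ^ 2)

/-!
Since `∇f` is `L`-Lipschitz, `|f (x + σu) - f x - σ⟪∇f x, u⟫| ≤ Lσ²‖u‖²/2`. Against the
Gaussian weight the linear term averages to zero and `‖u‖²` averages to at most `d/2`, so
`|f_σ - f| ≤ Lσ²d/4 < ε/3` everywhere. Hence outside the bounded set `f⋆(ε)` the continuous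
function `f_σ` exceeds its value at a near-minimiser of `f`, and so it attains its minimum.
-/

open Real Filter Topology
open scoped RealInnerProductSpace

section LipschitzGradient

variable {E : Type*} [NormedAddCommGroup E] [InnerProductSpace ℝ E] [CompleteSpace E]
  {f : E → ℝ} {L : ℝ}

lemma abs_sub_sub_inner_gradient_le (hdiff : Differentiable ℝ f)
    (hgrad : ∀ x y, ‖gradient f x - gradient f y‖ ≤ L * ‖x - y‖) (x y : E) :
    |f y - f x - ⟪gradient f x, y - x⟫| ≤ L / 2 * ‖y - x‖ ^ 2 := by
  set v := y - x
  have hderiv : ∀ t : ℝ,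
      HasDerivAt (fun t : ℝ ↦ f (x + t • v) - f x - t * ⟪gradient f x, v⟫)
        ⟪gradient f (x + t • v) - gradient f x, v⟫ t := by
    intro t
    have hline : HasDerivAt (fun t : ℝ ↦ x + t • v) v t := by
      simpa using ((hasDerivAt_id t).smul_const v).const_add x
    have hcomp := (hdiff (x + t • v)).hasGradientAt.hasFDerivAt.comp_hasDerivAt t hline
    have hlin := (hasDerivAt_id t).mul_const ⟪gradient f x, v⟫
    refine ((hcomp.sub_const (f x)).sub hlin).congr_deriv ?_
    simp [inner_sub_left]
  have hbound : ∀ t ∈ Set.Ico (0 : ℝ) 1,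
      ‖⟪gradient f (x + t • v) - gradient f x, v⟫‖ ≤ L * ‖v‖ ^ 2 * t := by
    rintro t ⟨ht, -⟩
    calc ‖⟪gradient f (x + t • v) - gradient f x, v⟫‖
        ≤ ‖gradient f (x + t • v) - gradient f x‖ * ‖v‖ := norm_inner_le_norm _ _
      _ ≤ L * ‖(x + t • v) - x‖ * ‖v‖ := by gcongr; exact hgrad _ _
      _ = L * ‖v‖ ^ 2 * t := by
        rw [add_sub_cancel_left, norm_smul, Real.norm_of_nonneg ht]; ring
  have hparabola : ∀ t : ℝ,
      HasDerivAt (fun t : ℝ ↦ L / 2 * ‖v‖ ^ 2 * t ^ 2) (L * ‖v‖ ^ 2 * t) t := fun t ↦ by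
    refine ((hasDerivAt_pow 2 t).const_mul (L / 2 * ‖v‖ ^ 2)).congr_deriv ?_
    ring
  have := image_norm_le_of_norm_deriv_right_le_deriv_boundary
    (fun t _ ↦ (hderiv t).continuousAt.continuousWithinAt)
    (fun t _ ↦ (hderiv t).hasDerivWithinAt)
    (by simp) hparabola hbound (Set.right_mem_Icc.2 zero_le_one)
  simpa [v] using this

lemma exists_abs_le_mul_one_add_sq_norm (hdiff : Differentiable ℝ f)
    (hgrad : ∀ x y, ‖gradient f x - gradient f y‖ ≤ L * ‖x - y‖) :
    ∃ C, ∀ z, |f z| ≤ C * (1 + ‖z‖ ^ 2) := by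
  refine ⟨|f 0| + ‖gradient f 0‖ + |L| / 2, fun z ↦ ?_⟩
  have htaylor := abs_sub_sub_inner_gradient_le hdiff hgrad 0 z
  rw [sub_zero] at htaylor
  have hinner := abs_real_inner_le_norm (gradient f 0) z
  have hz : ‖z‖ ≤ 1 + ‖z‖ ^ 2 := by nlinarith [sq_nonneg (‖z‖ - 1)]
  have hL : L / 2 * ‖z‖ ^ 2 ≤ |L| / 2 * (1 + ‖z‖ ^ 2) := by
    nlinarith [le_abs_self L, sq_nonneg ‖z‖, abs_nonneg L]
  have hg : ‖gradient f 0‖ * ‖z‖ ≤ ‖gradient f 0‖ * (1 + ‖z‖ ^ 2) :=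
    mul_le_mul_of_nonneg_left hz (norm_nonneg _)
  have h0 : |f 0| ≤ |f 0| * (1 + ‖z‖ ^ 2) :=
    le_mul_of_one_le_right (abs_nonneg _) (by nlinarith [sq_nonneg ‖z‖])
  calc |f z| = |(f z - f 0 - ⟪gradient f 0, z⟫) + f 0 + ⟪gradient f 0, z⟫| := by ring_nf
    _ ≤ |f z - f 0 - ⟪gradient f 0, z⟫| + |f 0| + |⟪gradient f 0, z⟫| := abs_add_three _ _ _
    _ ≤ _ := by linarith

end LipschitzGradient

lemma one_sub_mul_mul_exp_neg_le (b s : ℝ) :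
    (1 - b) * (s * rexp (-s)) ≤ rexp (-b * s) - rexp (-s) := by
  have h : rexp (-b * s) = rexp (-s) * rexp ((1 - b) * s) := by rw [← Real.exp_add]; ring_nf
  nlinarith [Real.add_one_le_exp ((1 - b) * s), Real.exp_pos (-s)]

section GaussianIntegrals

variable {V : Type*} [NormedAddCommGroup V] [InnerProductSpace ℝ V] [FiniteDimensional ℝ V]
  [MeasurableSpace V] [BorelSpace V]

lemma integrable_exp_neg_mul_sq_norm {b : ℝ} (hb : 0 < b) :
    Integrable fun v : V ↦ rexp (-b * ‖v‖ ^ 2) :=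
  Integrable.of_integral_ne_zero <| by
    rw [GaussianFourier.integral_rexp_neg_mul_sq_norm hb]; positivity

lemma integral_exp_neg_sq_norm :
    ∫ v : V, rexp (-‖v‖ ^ 2) = π ^ (Module.finrank ℝ V / 2 : ℝ) := by
  simpa using GaussianFourier.integral_rexp_neg_mul_sq_norm (V := V) one_pos

lemma integrable_sq_norm_mul_exp_neg_sq_norm :
    Integrable fun v : V ↦ ‖v‖ ^ 2 * rexp (-‖v‖ ^ 2) := by
  refine ((integrable_exp_neg_mul_sq_norm (V := V) one_half_pos).const_mul 2).mono'
    (by fun_prop) (ae_of_all _ fun v ↦ ?_)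
  have := one_sub_mul_mul_exp_neg_le (1 / 2) (‖v‖ ^ 2)
  rw [Real.norm_of_nonneg (by positivity)]
  nlinarith [Real.exp_pos (-‖v‖ ^ 2)]

/-- The second moment is `-(d/db) (π/b)^(n/2)` at `b = 1`, where `n = finrank ℝ V`; by convexity
of `b ↦ e^{-bs}` it is bounded by every left difference quotient, whose limit is `n/2 · π^(n/2)`. -/
lemma integral_sq_norm_mul_exp_neg_sq_norm_le :
    ∫ v : V, ‖v‖ ^ 2 * rexp (-‖v‖ ^ 2)
      ≤ Module.finrank ℝ V / 2 * π ^ (Module.finrank ℝ V / 2 : ℝ) := by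
  set p : ℝ := Module.finrank ℝ V / 2
  set M := ∫ v : V, ‖v‖ ^ 2 * rexp (-‖v‖ ^ 2)
  have hquot : ∀ b ∈ Set.Ioo (0 : ℝ) 1, M ≤ π ^ p * -slope (fun b ↦ b ^ (-p)) 1 b := by
    rintro b ⟨hb0, hb1⟩
    have hmoment : (1 - b) * M ≤ π ^ p * (b ^ (-p) - 1) := by
      calc (1 - b) * M = ∫ v : V, (1 - b) * (‖v‖ ^ 2 * rexp (-‖v‖ ^ 2)) :=
            (integral_const_mul _ _).symm
        _ ≤ ∫ v : V, (rexp (-b * ‖v‖ ^ 2) - rexp (-1 * ‖v‖ ^ 2)) :=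
            integral_mono (integrable_sq_norm_mul_exp_neg_sq_norm.const_mul _)
              ((integrable_exp_neg_mul_sq_norm hb0).sub (integrable_exp_neg_mul_sq_norm one_pos))
              fun v ↦ by simpa using one_sub_mul_mul_exp_neg_le b (‖v‖ ^ 2)
        _ = π ^ p * (b ^ (-p) - 1) := by
            rw [integral_sub (integrable_exp_neg_mul_sq_norm hb0)
              (integrable_exp_neg_mul_sq_norm one_pos),
              GaussianFourier.integral_rexp_neg_mul_sq_norm hb0,
              GaussianFourier.integral_rexp_neg_mul_sq_norm one_pos,
              Real.div_rpow pi_pos.le hb0.le, Real.rpow_neg hb0.le]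
            simp [p, div_eq_mul_inv, mul_sub]
    rw [slope_def_field, Real.one_rpow, show b - 1 = -(1 - b) by ring, div_neg, neg_neg,
      mul_div_assoc', le_div_iff₀ (by linarith)]
    linarith
  have hderiv : HasDerivAt (fun b : ℝ ↦ b ^ (-p)) (-p) 1 := by
    simpa using Real.hasDerivAt_rpow_const (x := 1) (p := -p) (Or.inl one_ne_zero)
  have hlim : Tendsto (fun b : ℝ ↦ π ^ p * -slope (fun b ↦ b ^ (-p)) 1 b) (𝓝[<] 1)
      (𝓝 (π ^ p * - -p)) :=
    ((hderiv.tendsto_slope.mono_left (nhdsWithin_mono _ fun _ h ↦ ne_of_lt h)).neg).const_mul _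
  rw [neg_neg, mul_comm] at hlim
  exact ge_of_tendsto hlim (eventually_of_mem (Ioo_mem_nhdsLT zero_lt_one) hquot)

lemma integral_inner_mul_exp_neg_sq_norm (w : V) :
    ∫ v : V, ⟪w, v⟫ * rexp (-‖v‖ ^ 2) = 0 := by
  have h := integral_neg_eq_self (fun v : V ↦ ⟪w, v⟫ * rexp (-‖v‖ ^ 2)) volume
  simp only [inner_neg_right, norm_neg, neg_mul, integral_neg] at h
  linarith

lemma integrable_mul_exp_neg_sq_norm_of_abs_le {h : V → ℝ} (hh : AEStronglyMeasurable h)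
    {C : ℝ} (hC : ∀ v, |h v| ≤ C * (1 + ‖v‖ ^ 2)) :
    Integrable fun v : V ↦ h v * rexp (-‖v‖ ^ 2) := by
  refine (((integrable_exp_neg_mul_sq_norm (V := V) one_pos).add
    integrable_sq_norm_mul_exp_neg_sq_norm).const_mul C).mono'
    (hh.mul (by fun_prop)) (ae_of_all _ fun v ↦ ?_)
  rw [norm_mul, Real.norm_eq_abs, Real.norm_of_nonneg (Real.exp_pos _).le]
  calc |h v| * rexp (-‖v‖ ^ 2) ≤ C * (1 + ‖v‖ ^ 2) * rexp (-‖v‖ ^ 2) :=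
        mul_le_mul_of_nonneg_right (hC v) (Real.exp_pos _).le
    _ = _ := by simp only [Pi.add_apply, neg_mul, one_mul]; ring

lemma integrable_add_inner_mul_exp_neg_sq_norm (a : ℝ) (w : V) :
    Integrable fun u : V ↦ (a + ⟪w, u⟫) * rexp (-‖u‖ ^ 2) :=
  integrable_mul_exp_neg_sq_norm_of_abs_le (by fun_prop) (C := |a| + ‖w‖) fun u ↦ by
    have hinner := abs_real_inner_le_norm w u
    have hsum := abs_add_le a ⟪w, u⟫
    nlinarith [sq_nonneg (‖u‖ - 1), abs_nonneg a, norm_nonneg w, norm_nonneg u]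

lemma integral_add_inner_mul_exp_neg_sq_norm (a : ℝ) (w : V) :
    ∫ u : V, (a + ⟪w, u⟫) * rexp (-‖u‖ ^ 2) = π ^ (Module.finrank ℝ V / 2 : ℝ) * a := by
  have hexp : Integrable fun u : V ↦ rexp (-‖u‖ ^ 2) := by
    simpa using integrable_exp_neg_mul_sq_norm (V := V) one_pos
  have hinner : Integrable fun u : V ↦ ⟪w, u⟫ * rexp (-‖u‖ ^ 2) := by
    simpa using integrable_add_inner_mul_exp_neg_sq_norm 0 w
  simp_rw [add_mul]
  rw [integral_add (hexp.const_mul a) hinner, integral_const_mul, integral_exp_neg_sq_norm,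
    integral_inner_mul_exp_neg_sq_norm, add_zero, mul_comm]

lemma continuous_integral_comp_add_smul_mul_exp {h : V → ℝ} (hh : Continuous h) {C : ℝ}
    (hC : ∀ v, |h v| ≤ C * (1 + ‖v‖ ^ 2)) (σ : ℝ) :
    Continuous fun x ↦ ∫ u : V, h (x + σ • u) * rexp (-‖u‖ ^ 2) := by
  have hC0 : 0 ≤ C := by simpa using (abs_nonneg _).trans (hC 0)
  refine continuous_iff_continuousAt.2 fun x₀ ↦ ?_
  set R := ‖x₀‖ + 1
  have hdom : ∀ y ∈ Metric.ball x₀ 1, ∀ u : V, ‖h (y + σ • u) * rexp (-‖u‖ ^ 2)‖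
      ≤ C * (1 + (2 * R ^ 2 + 2 * σ ^ 2 * ‖u‖ ^ 2)) * rexp (-‖u‖ ^ 2) := by
    intro y hy u
    have hyR : ‖y‖ ≤ R := by
      have := norm_le_norm_add_norm_sub' y x₀
      rw [← dist_eq_norm] at this
      linarith [Metric.mem_ball.1 hy]
    have hsq : ‖y + σ • u‖ ^ 2 ≤ 2 * R ^ 2 + 2 * σ ^ 2 * ‖u‖ ^ 2 := by
      have h1 : ‖y + σ • u‖ ≤ R + |σ| * ‖u‖ := by
        rw [← Real.norm_eq_abs, ← norm_smul]; linarith [norm_add_le y (σ • u)]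
      calc ‖y + σ • u‖ ^ 2 ≤ (R + |σ| * ‖u‖) ^ 2 := by gcongr
        _ ≤ 2 * (R ^ 2 + (|σ| * ‖u‖) ^ 2) := add_sq_le
        _ = 2 * R ^ 2 + 2 * σ ^ 2 * ‖u‖ ^ 2 := by rw [mul_pow, sq_abs]; ring
    rw [norm_mul, Real.norm_eq_abs, Real.norm_of_nonneg (exp_pos _).le]
    gcongr
    exact (hC _).trans (by gcongr)
  refine continuousAt_of_dominated (Eventually.of_forall fun y ↦ by fun_prop)
    (eventually_of_mem (Metric.ball_mem_nhds x₀ one_pos) fun y hy ↦ ae_of_all _ (hdom y hy))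
    (integrable_mul_exp_neg_sq_norm_of_abs_le (by fun_prop)
      (C := C * (1 + 2 * R ^ 2 + 2 * σ ^ 2)) fun u ↦ ?_)
    (ae_of_all _ fun u ↦ by fun_prop)
  rw [abs_of_nonneg (by positivity)]
  have : 0 ≤ C * ‖u‖ ^ 2 := by positivity
  nlinarith [sq_nonneg R, sq_nonneg σ]

lemma abs_integral_comp_add_smul_mul_exp_sub_le {f : V → ℝ} {L : ℝ} (hL : 0 ≤ L)
    (hdiff : Differentiable ℝ f)
    (hgrad : ∀ x y, ‖gradient f x - gradient f y‖ ≤ L * ‖x - y‖) (σ : ℝ) (x : V) :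
    |(∫ u : V, f (x + σ • u) * rexp (-‖u‖ ^ 2)) - π ^ (Module.finrank ℝ V / 2 : ℝ) * f x|
      ≤ L * σ ^ 2 * Module.finrank ℝ V / 4 * π ^ (Module.finrank ℝ V / 2 : ℝ) := by
  set g := gradient f x
  set r : V → ℝ := fun u ↦ f (x + σ • u) - f x - σ * ⟪g, u⟫
  have hr : ∀ u, |r u| ≤ L * σ ^ 2 / 2 * ‖u‖ ^ 2 := fun u ↦ by
    have := abs_sub_sub_inner_gradient_le hdiff hgrad x (x + σ • u)
    rwa [add_sub_cancel_left, real_inner_smul_right, norm_smul, mul_pow, Real.norm_eq_abs,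
      sq_abs, ← mul_assoc, div_mul_eq_mul_div] at this
  have hr_cont : Continuous r := by
    have := hdiff.continuous
    simp only [r]
    fun_prop
  have hr_int : Integrable fun u ↦ r u * rexp (-‖u‖ ^ 2) :=
    integrable_mul_exp_neg_sq_norm_of_abs_le hr_cont.aestronglyMeasurable
      (C := L * σ ^ 2 / 2) fun u ↦ (hr u).trans (by gcongr; linarith)
  have hsplit : ∫ u : V, f (x + σ • u) * rexp (-‖u‖ ^ 2)
      = (∫ u, r u * rexp (-‖u‖ ^ 2)) + π ^ (Module.finrank ℝ V / 2 : ℝ) * f x := by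
    rw [← integral_add_inner_mul_exp_neg_sq_norm (f x) (σ • g),
      ← integral_add hr_int (integrable_add_inner_mul_exp_neg_sq_norm _ _)]
    congr with u
    simp only [r, real_inner_smul_left]
    ring
  rw [hsplit, add_sub_cancel_right]
  calc |∫ u, r u * rexp (-‖u‖ ^ 2)|
      ≤ ∫ u : V, L * σ ^ 2 / 2 * (‖u‖ ^ 2 * rexp (-‖u‖ ^ 2)) := by
        rw [← Real.norm_eq_abs]
        refine norm_integral_le_of_norm_le (integrable_sq_norm_mul_exp_neg_sq_norm.const_mul _)
          (ae_of_all _ fun u ↦ ?_)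
        rw [norm_mul, Real.norm_eq_abs, Real.norm_of_nonneg (exp_pos _).le, ← mul_assoc]
        exact mul_le_mul_of_nonneg_right (hr u) (exp_pos _).le
    _ ≤ L * σ ^ 2 / 2 * (Module.finrank ℝ V / 2 * π ^ (Module.finrank ℝ V / 2 : ℝ)) := by
        rw [integral_const_mul]
        gcongr
        exact integral_sq_norm_mul_exp_neg_sq_norm_le
    _ = _ := by ring

end GaussianIntegrals

lemma exists_forall_le_of_abs_sub_le {X : Type*} [MetricSpace X] [ProperSpace X] [Nonempty X]
    {f g : X → ℝ} (hg : Continuous g) {c ε : ℝ}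
    (hfg : ∀ x, |g x - f x| ≤ c) (hcε : 2 * c < ε)
    (hbound : Bornology.IsBounded {x | f x - (⨅ y, f y) ≤ ε}) :
    ∃ x, ∀ y, g x ≤ g y := by
  obtain ⟨x₀, hx₀⟩ : ∃ x₀, f x₀ < (⨅ y, f y) + (ε - 2 * c) :=
    exists_lt_of_ciInf_lt (lt_add_of_pos_right _ (by linarith))
  refine hg.exists_forall_le' x₀ ?_
  filter_upwards [hbound.isCompact_closure.compl_mem_cocompact] with x hx
  have hfx : ε < f x - ⨅ y, f y := lt_of_not_ge fun h ↦ hx (subset_closure h)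
  linarith [(abs_le.1 (hfg x)).1, (abs_le.1 (hfg x₀)).2]

section GaussianSmoothingEuclidean

variable {d : ℕ} {f : EuclideanSpace ℝ (Fin d) → ℝ} {L : ℝ}

lemma continuous_gsmooth (hdiff : Differentiable ℝ f)
    (hgrad : ∀ x y, ‖gradient f x - gradient f y‖ ≤ L * ‖x - y‖) (σ : ℝ) :
    Continuous (gsmooth f σ) := by
  unfold gsmooth
  by_cases hσ : σ = 0
  · simpa only [hσ, if_true] using hdiff.continuous
  obtain ⟨C, hC⟩ := exists_abs_le_mul_one_add_sq_norm hdiff hgrad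
  simp only [hσ, if_false]
  exact continuous_const.mul (continuous_integral_comp_add_smul_mul_exp hdiff.continuous hC σ)

lemma abs_gsmooth_sub_le (hL : 0 ≤ L) (hdiff : Differentiable ℝ f)
    (hgrad : ∀ x y, ‖gradient f x - gradient f y‖ ≤ L * ‖x - y‖) (σ : ℝ)
    (x : EuclideanSpace ℝ (Fin d)) :
    |gsmooth f σ x - f x| ≤ L * σ ^ 2 * d / 4 := by
  by_cases hσ : σ = 0
  · simp [gsmooth, hσ]
  have h := abs_integral_comp_add_smul_mul_exp_sub_le hL hdiff hgrad σ x
  rw [finrank_euclideanSpace_fin] at h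
  have hP : 0 < π ^ (d / 2 : ℝ) := rpow_pos_of_pos pi_pos _
  have hsmooth : gsmooth f σ x - f x = (π ^ (d / 2 : ℝ))⁻¹ *
      ((∫ u, f (x + σ • u) * rexp (-‖u‖ ^ 2)) - π ^ (d / 2 : ℝ) * f x) := by
    rw [gsmooth, if_neg hσ, neg_div, rpow_neg pi_pos.le]
    field_simp
  rw [hsmooth, abs_mul, abs_inv, abs_of_pos hP, inv_mul_le_iff₀ hP]
  linarith

end GaussianSmoothingEuclidean

theorem gsmooth_min_exists_general {d : ℕ} (hd : 1 ≤ d) {L σ ε : ℝ} (hL : 0 < L)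
    (f : EuclideanSpace ℝ (Fin d) → ℝ)
    (hdiff : Differentiable ℝ f)
    (hgrad : ∀ x y, ‖gradient f x - gradient f y‖ ≤ L * ‖x - y‖)
    (hbound : Bornology.IsBounded
      {x : EuclideanSpace ℝ (Fin d) | f x - (⨅ y, f y) ≤ ε})
    (hσ : 0 < σ) (hσ' : σ < Real.sqrt (4 * ε / (3 * L * d))) :
    ∃ xsig : EuclideanSpace ℝ (Fin d), ∀ x, gsmooth f σ xsig ≤ gsmooth f σ x := by
  have hσ2 : σ ^ 2 * (3 * L * d) < 4 * ε := by
    have hd0 : (0 : ℝ) < d := by exact_mod_cast hd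
    rw [← lt_div_iff₀ (by positivity)]
    exact (Real.lt_sqrt hσ.le).1 hσ'
  have hc : 0 ≤ L * σ ^ 2 * d / 4 := by positivity
  exact exists_forall_le_of_abs_sub_le (continuous_gsmooth hdiff hgrad σ)
    (abs_gsmooth_sub_le hL.le hdiff hgrad σ) (by linarith) hbound

/-- If the sublevel set `f⋆(ε)` is bounded for some `ε > 0` and
`0 < σ < √(4ε/(3Ld))`, then `f_σ` attains its minimum. -/
theorem gsmooth_min_exists {d : ℕ} (hd : 1 ≤ d) {L σ ε : ℝ} (hL : 0 < L)
    (f : EuclideanSpace ℝ (Fin d) → ℝ)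
    (hdiff : Differentiable ℝ f)
    (hgrad : ∀ x y, ‖gradient f x - gradient f y‖ ≤ L * ‖x - y‖)
    (hbdd : BddBelow (Set.range f))
    (hε : 0 < ε)
    (hbound : Bornology.IsBounded
      {x : EuclideanSpace ℝ (Fin d) | f x - (⨅ y, f y) ≤ ε})
    (hσ : 0 < σ) (hσ' : σ < Real.sqrt (4 * ε / (3 * L * d))) :
    ∃ xsig : EuclideanSpace ℝ (Fin d), ∀ x, gsmooth f σ xsig ≤ gsmooth f σ x :=
  gsmooth_min_exists_general hd hL f hdiff hgrad hbound hσ hσ'
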